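/- Let λ be a limit ordinal and w a λ-biworld. Then for every agent A, the union A↑w ∪ Ā↑w equals the set of all λ-biworlds. -/

import Mathlib

/-!
Since `w` is a biworld, each component `(w)_{α+1}` splits the `α`-biworlds into
`A^{(w)_{α+1}} ∪ Ā^{(w)_{α+1}}`, so a `λ`-prebiworld `v` of the right depth is a biworld iff each
component `(v)_α` lies in that union. Restriction to depth `α` maps `A^{(w)_{β+1}}` into
`A^{(w)_{α+1}}` and likewise for `Ā`, and the components of `v` are coherent under restriction.
Hence if some `(v)_{α₀}` is not in `A^{(w)_{α₀+1}}`, it is in `Ā^{(w)_{α₀+1}}`; the lower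
components are then in `Ā` by restriction, and a higher component in `A` would restrict to
`(v)_{α₀} ∈ A^{(w)_{α₀+1}}`. So `v` lies entirely in `A↑w` or entirely in `Ā↑w`.
-/

open Ordinal

/-- Three truth values: true, false, unknown. -/
inductive TV : Type
  | t | f | u
deriving DecidableEq

namespace TV

/-- Inverse of a truth value. -/
def inv : TV → TV
  | t => f
  | f => t
  | u => u

/-- Binary greatest lower bound in the truth order f ≤ₜ u ≤ₜ t. -/
def tmin : TV → TV → TV
  | f, _ => f
  | _, f => f
  | u, _ => u
  | _, u => u
  | t, t => t

/-- Truth value of a proposition. -/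
noncomputable def ofProp (p : Prop) : TV := by
  classical
  exact if p then t else f

/-- Greatest lower bound of a set of truth values in the truth order f ≤ₜ u ≤ₜ t. -/
noncomputable def tglbSet (s : Set TV) : TV := by
  classical
  exact if f ∈ s then f else if u ∈ s then u else t

/-- Least upper bound of a (chain) set of truth values in the precision order
u ≤ₚ t, u ≤ₚ f. -/
noncomputable def plubSet (s : Set TV) : TV := by
  classical
  exact if t ∈ s then t else if f ∈ s then f else u

/-- Precision order on truth values: u below everything. -/
def ple (a b : TV) : Prop := a = u ∨ a = b

end TV

/-- Formulas of the language COEL. -/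
inductive Form (Agent Atom : Type) : Type
  | atom : Atom → Form Agent Atom
  | neg : Form Agent Atom → Form Agent Atom
  | and : Form Agent Atom → Form Agent Atom → Form Agent Atom
  | K : Agent → Form Agent Atom → Form Agent Atom
  | M : Agent → Form Agent Atom → Form Agent Atom
  | E : Set Agent → Form Agent Atom → Form Agent Atom
  | C : Set Agent → Form Agent Atom → Form Agent Atom

/-- Iterated `E_G` operator: `Eiter G 0 φ = φ`, `Eiter G (k+1) φ = E_G (Eiter G k φ)`. -/
def Form.Eiter {Agent Atom : Type} (G : Set Agent) : ℕ → Form Agent Atom → Form Agent Atom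
  | 0, φ => φ
  | k + 1, φ => .E G (Form.Eiter G k φ)

/-- Modal depth of a COEL formula. -/
noncomputable def Form.MD {Agent Atom : Type} : Form Agent Atom → Ordinal.{0}
  | .atom _ => 0
  | .neg φ => φ.MD
  | .and φ ψ => max φ.MD ψ.MD
  | .K _ φ => φ.MD + 1
  | .M _ φ => φ.MD + 1
  | .E _ φ => φ.MD + 1
  | .C _ φ => φ.MD + omega0

/-- A system of prebiworlds over agents `Agent` and propositional vocabulary `Atom`,
packaging the transfinite construction of μ-prebiworlds for all countable ordinals μ,
together with the recursive equations defining restriction. -/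
structure PrebSys (Agent Atom : Type) where
  /-- the collection of all prebiworlds (of all depths) -/
  W : Type 1
  /-- the depth of a prebiworld -/
  depth : W → Ordinal.{0}
  depth_countable : ∀ w, (depth w).card ≤ Cardinal.aleph0
  /-- the objective interpretation of a prebiworld -/
  obj : W → Set Atom
  /-- for a (μ+1)-prebiworld, the set A^w of μ-prebiworlds deemed (extendibly) possible -/
  poss : Agent → W → Set W
  /-- for a (μ+1)-prebiworld, the set Ā^w of μ-prebiworlds deemed (extendibly) impossible -/
  imposs : Agent → W → Set W
  /-- for a limit-depth prebiworld, its component (w)_α at α < depth w -/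
  comp : W → Ordinal.{0} → W
  /-- the restriction w|_α of w to depth α ≤ depth w -/
  restrict : W → Ordinal.{0} → W
  depth_poss : ∀ (A : Agent) (w v : W), v ∈ poss A w → depth w = depth v + 1
  depth_imposs : ∀ (A : Agent) (w v : W), v ∈ imposs A w → depth w = depth v + 1
  depth_comp : ∀ (w : W) (α : Ordinal.{0}), Order.IsSuccLimit (depth w) → α < depth w →
    depth (comp w α) = α
  comp_mono : ∀ (w : W) (α β : Ordinal.{0}), Order.IsSuccLimit (depth w) → α ≤ β → β < depth w →
    restrict (comp w β) α = comp w α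
  ext_zero : ∀ w w' : W, depth w = 0 → depth w' = 0 → obj w = obj w' → w = w'
  ext_succ : ∀ (w w' : W) (μ : Ordinal.{0}), depth w = μ + 1 → depth w' = μ + 1 →
    obj w = obj w' → (∀ A, poss A w = poss A w') → (∀ A, imposs A w = imposs A w') → w = w'
  ext_limit : ∀ w w' : W, Order.IsSuccLimit (depth w) → depth w' = depth w →
    (∀ α < depth w, comp w α = comp w' α) → w = w'
  depth_restrict : ∀ (w : W) (α : Ordinal.{0}), α ≤ depth w → depth (restrict w α) = α
  restrict_zero : ∀ w : W, obj (restrict w 0) = obj w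
  restrict_limit : ∀ (w : W) (α β : Ordinal.{0}), Order.IsSuccLimit α → α ≤ depth w → β < α →
    comp (restrict w α) β = restrict w β
  restrict_succ_limit : ∀ (w : W) (α : Ordinal.{0}), Order.IsSuccLimit (depth w) →
    α + 1 ≤ depth w → restrict w (α + 1) = comp w (α + 1)
  restrict_succ_obj : ∀ (w : W) (μ α : Ordinal.{0}), depth w = μ + 1 → α + 1 ≤ depth w →
    obj (restrict w (α + 1)) = obj w
  restrict_succ_poss : ∀ (w : W) (μ α : Ordinal.{0}) (A : Agent), depth w = μ + 1 →
    α + 1 ≤ depth w →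
    poss A (restrict w (α + 1)) = (fun v => restrict v α) '' poss A w
  restrict_succ_imposs : ∀ (w : W) (μ α : Ordinal.{0}) (A : Agent), depth w = μ + 1 →
    α + 1 ≤ depth w →
    imposs A (restrict w (α + 1)) = (fun v => restrict v α) '' imposs A w

/-- The precision order: v ≤ₚ w iff w restricted to the depth of v equals v. -/
def PrebSys.lep {Agent Atom : Type} (S : PrebSys Agent Atom) (v w : S.W) : Prop :=
  S.depth v ≤ S.depth w ∧ S.restrict w (S.depth v) = v

/-- A system of biworlds: prebiworlds together with the simultaneously
(transfinite-recursively) defined predicates `Biworld` and `Incompleted`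
and their defining clauses. -/
structure BiSys (Agent Atom : Type) extends PrebSys Agent Atom where
  Biworld : W → Prop
  Incompleted : W → Prop
  biworld_zero : ∀ w : W, depth w = 0 → Biworld w
  biworld_succ : ∀ (w : W) (μ : Ordinal.{0}), depth w = μ + 1 →
    (Biworld w ↔ ∀ A : Agent,
      poss A w ∪ imposs A w = {v | depth v = μ ∧ Biworld v} ∧
      ∀ v ∈ poss A w ∩ imposs A w, Incompleted v)
  biworld_limit : ∀ w : W, Order.IsSuccLimit (depth w) →
    (Biworld w ↔ ∀ α < depth w, Biworld (comp w α))
  incompleted_iff : ∀ w : W, Incompleted w ↔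
    ∃ v₁ v₂ : W, v₁ ≠ v₂ ∧ Biworld v₁ ∧ Biworld v₂ ∧
      depth v₁ = depth w + 1 ∧ depth v₂ = depth w + 1 ∧
      PrebSys.lep toPrebSys w v₁ ∧ PrebSys.lep toPrebSys w v₂

/-- A biworld is completed if it is not incompleted. -/
def BiSys.Completed {Agent Atom : Type} (S : BiSys Agent Atom) (w : S.W) : Prop :=
  ¬ S.Incompleted w

/-- For a limit-depth prebiworld w, the set A↑w. -/
def BiSys.upPoss {Agent Atom : Type} (S : BiSys Agent Atom) (A : Agent) (w : S.W) :
    Set S.W :=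
  {v | S.depth v = S.depth w ∧ ∀ α < S.depth w, S.comp v α ∈ S.poss A (S.comp w (α + 1))}

/-- For a limit-depth prebiworld w, the set Ā↑w. -/
def BiSys.upImposs {Agent Atom : Type} (S : BiSys Agent Atom) (A : Agent) (w : S.W) :
    Set S.W :=
  {v | S.depth v = S.depth w ∧ ∀ α < S.depth w, S.comp v α ∈ S.imposs A (S.comp w (α + 1))}

/-- A system of biworlds together with the three-valued valuation of COEL formulas
and its defining equations. -/
structure ValSys (Agent Atom : Type) extends BiSys Agent Atom where
  val : Form Agent Atom → W → TV
  val_atom : ∀ (P : Atom) (w : W), val (.atom P) w = TV.ofProp (P ∈ obj w)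
  val_neg : ∀ (φ : Form Agent Atom) (w : W), val (.neg φ) w = (val φ w).inv
  val_and : ∀ (φ ψ : Form Agent Atom) (w : W),
    val (.and φ ψ) w = (val φ w).tmin (val ψ w)
  val_K_zero : ∀ (A : Agent) (φ : Form Agent Atom) (w : W), depth w = 0 →
    val (.K A φ) w = TV.u
  val_K_succ : ∀ (A : Agent) (φ : Form Agent Atom) (w : W) (μ : Ordinal.{0}),
    depth w = μ + 1 → val (.K A φ) w = TV.tglbSet (val φ '' poss A w)
  val_K_limit : ∀ (A : Agent) (φ : Form Agent Atom) (w : W), Order.IsSuccLimit (depth w) →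
    val (.K A φ) w = TV.plubSet {x | ∃ α < depth w, x = val (.K A φ) (comp w α)}
  val_M_zero : ∀ (A : Agent) (φ : Form Agent Atom) (w : W), depth w = 0 →
    val (.M A φ) w = TV.u
  val_M_succ : ∀ (A : Agent) (φ : Form Agent Atom) (w : W) (μ : Ordinal.{0}),
    depth w = μ + 1 →
    val (.M A φ) w = TV.tglbSet ((fun v => (val φ v).inv) '' imposs A w)
  val_M_limit : ∀ (A : Agent) (φ : Form Agent Atom) (w : W), Order.IsSuccLimit (depth w) →
    val (.M A φ) w = TV.plubSet {x | ∃ α < depth w, x = val (.M A φ) (comp w α)}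
  val_E : ∀ (G : Set Agent) (φ : Form Agent Atom) (w : W),
    val (.E G φ) w = TV.tglbSet {x | ∃ A ∈ G, x = val (.K A φ) w}
  val_C : ∀ (G : Set Agent) (φ : Form Agent Atom) (w : W),
    val (.C G φ) w = TV.tglbSet {x | ∃ k : ℕ, 1 ≤ k ∧ x = val (Form.Eiter G k φ) w}

/-- A world: a completed (ω²+1)-biworld. -/
def ValSys.World {Agent Atom : Type} (S : ValSys Agent Atom) (w : S.W) : Prop :=
  S.Biworld w ∧ S.depth w = omega0 ^ 2 + 1 ∧ S.toBiSys.Completed w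

/-- Accessibility in the canonical Kripke structure K*: w R_A w' iff w'|_{ω²} ∈ A^w. -/
def ValSys.Racc {Agent Atom : Type} (S : ValSys Agent Atom) (A : Agent)
    (w w' : S.W) : Prop :=
  S.restrict w' (omega0 ^ 2) ∈ S.poss A w

/-- Two-valued Kripke valuation on the canonical Kripke structure K* of worlds. -/
def ValSys.kval {Agent Atom : Type} (S : ValSys Agent Atom) :
    Form Agent Atom → S.W → Prop
  | .atom P, w => P ∈ S.obj w
  | .neg φ, w => ¬ S.kval φ w
  | .and φ ψ, w => S.kval φ w ∧ S.kval ψ w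
  | .K A φ, w => ∀ w', S.World w' → S.Racc A w w' → S.kval φ w'
  | .M A φ, w => ∀ w', S.World w' → S.kval φ w' → S.Racc A w w'
  | .E G φ, w => ∀ A ∈ G, ∀ w', S.World w' → S.Racc A w w' → S.kval φ w'
  | .C G φ, w => ∀ w', Relation.TransGen (fun x y => S.World y ∧ ∃ A ∈ G, S.Racc A x y) w w' →
      S.kval φ w'

theorem forall_mem_or_forall_mem_iff_of_mapsTo {ι W : Type*} [LinearOrder ι] {b : ι}
    {x : ι → W} {r : ι → W → W} {P I : ι → Set W}
    (hx : ∀ α β, α ≤ β → β < b → r α (x β) = x α)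
    (hP : ∀ α β, α ≤ β → β < b → Set.MapsTo (r α) (P β) (P α))
    (hI : ∀ α β, α ≤ β → β < b → Set.MapsTo (r α) (I β) (I α)) :
    ((∀ α < b, x α ∈ P α) ∨ ∀ α < b, x α ∈ I α) ↔ ∀ α < b, x α ∈ P α ∪ I α := by
  refine ⟨by rintro (h | h) α hα; exacts [Or.inl (h α hα), Or.inr (h α hα)], fun hmem => ?_⟩
  refine or_iff_not_imp_left.2 fun hP_all β hβ => ?_
  push Not at hP_all
  obtain ⟨α₀, hα₀, hnP⟩ := hP_all
  have hI₀ : x α₀ ∈ I α₀ := (hmem α₀ hα₀).resolve_left hnP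
  rcases le_total β α₀ with hle | hle
  · exact hx β α₀ hle hα₀ ▸ hI β α₀ hle hα₀ hI₀
  · exact (hmem β hβ).resolve_left fun hPβ => hnP (hx α₀ β hle hβ ▸ hP α₀ β hle hβ hPβ)

namespace PrebSys

variable {Agent Atom : Type} (S : PrebSys Agent Atom) {w : S.W} {α β : Ordinal.{0}}

theorem depth_comp_succ (hlim : Order.IsSuccLimit (S.depth w)) (hβ : β < S.depth w) :
    S.depth (S.comp w (β + 1)) = β + 1 :=
  S.depth_comp w (β + 1) hlim (hlim.add_one_lt hβ)

theorem mapsTo_restrict_comp_succ {R : Agent → S.W → Set S.W}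
    (hR : ∀ (u : S.W) (μ α : Ordinal.{0}) (A : Agent), S.depth u = μ + 1 → α + 1 ≤ S.depth u →
      R A (S.restrict u (α + 1)) = (fun v => S.restrict v α) '' R A u)
    (A : Agent) (hlim : Order.IsSuccLimit (S.depth w)) (hαβ : α ≤ β) (hβ : β < S.depth w) :
    Set.MapsTo (fun v => S.restrict v α) (R A (S.comp w (β + 1))) (R A (S.comp w (α + 1))) := by
  have hsucc : α + 1 ≤ β + 1 := add_le_add_left hαβ 1
  rw [← S.comp_mono w (α + 1) (β + 1) hlim hsucc (hlim.add_one_lt hβ),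
    hR _ β α A (S.depth_comp_succ hlim hβ) (hsucc.trans_eq (S.depth_comp_succ hlim hβ).symm)]
  exact Set.mapsTo_image _ _

end PrebSys

namespace BiSys

variable {Agent Atom : Type} (S : BiSys Agent Atom) {w : S.W}

theorem poss_union_imposs_comp_succ (hlim : Order.IsSuccLimit (S.depth w)) (hb : S.Biworld w)
    (A : Agent) {α : Ordinal.{0}} (hα : α < S.depth w) :
    S.poss A (S.comp w (α + 1)) ∪ S.imposs A (S.comp w (α + 1)) =
      {v | S.depth v = α ∧ S.Biworld v} :=
  ((S.biworld_succ _ α (S.depth_comp_succ hlim hα)).1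
    ((S.biworld_limit w hlim).1 hb _ (hlim.add_one_lt hα)) A).1

theorem biworld_iff_forall_comp_mem_poss_union_imposs (hlim : Order.IsSuccLimit (S.depth w))
    (hb : S.Biworld w) (A : Agent) {v : S.W} (hd : S.depth v = S.depth w) :
    S.Biworld v ↔
      ∀ α < S.depth w,
        S.comp v α ∈ S.poss A (S.comp w (α + 1)) ∪ S.imposs A (S.comp w (α + 1)) := by
  have hvlim : Order.IsSuccLimit (S.depth v) := hd ▸ hlim
  rw [S.biworld_limit v hvlim, hd]
  refine forall₂_congr fun α hα => ?_
  rw [S.poss_union_imposs_comp_succ hlim hb A hα, Set.mem_ofPred_eq,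
    S.depth_comp v α hvlim (hd ▸ hα)]
  exact (and_iff_right rfl).symm

end BiSys

/-- for a limit ordinal λ and a λ-biworld w, A↑w ∪ Ā↑w is the set of
all λ-biworlds. -/
theorem upPoss_union_upImposs {Agent Atom : Type} (S : BiSys Agent Atom) (w : S.W)
    (hlim : Order.IsSuccLimit (S.depth w)) (hb : S.Biworld w) (A : Agent) :
    S.upPoss A w ∪ S.upImposs A w = {v | S.depth v = S.depth w ∧ S.Biworld v} := by
  ext v
  simp only [Set.mem_union, BiSys.upPoss, BiSys.upImposs, Set.mem_ofPred_eq, ← and_or_left]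
  refine and_congr_right fun hd => ?_
  have hvlim : Order.IsSuccLimit (S.depth v) := hd ▸ hlim
  rw [S.biworld_iff_forall_comp_mem_poss_union_imposs hlim hb A hd]
  exact forall_mem_or_forall_mem_iff_of_mapsTo
    (fun α β hαβ hβ => S.comp_mono v α β hvlim hαβ (hd ▸ hβ))
    (fun _ _ => S.mapsTo_restrict_comp_succ S.restrict_succ_poss A hlim)
    (fun _ _ => S.mapsTo_restrict_comp_succ S.restrict_succ_imposs A hlim)
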